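/- arXiv:2506.11893 — 5 statements merged into one kernel-verified Lean document; each statement's English description precedes it below -/
import Mathlib

section
/- Let H ∈ ℝ^{m×d}, r > 0, σ_ε ≥ 0, σ_y > 0, m₀ ∈ ℝ^d and y ∈ ℝ^m. Set C := r²·I (d×d), R := σ_y²·I + σ_ε²·H·Hᵀ (m×m), η₁ := σ_ε²/r², η₂ := σ_y²/r², W := η₁·H·Hᵀ + η₂·I and Y := I + Hᵀ·W⁻¹·H. Then the Bayesian posterior mean equals the MAS closed-form solution: (C⁻¹ + Hᵀ·R⁻¹·H)⁻¹·(C⁻¹·m₀ + Hᵀ·R⁻¹·y) = Y⁻¹·(m₀ + Hᵀ·W⁻¹·y). -/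
/-!
Since `C = r² I` and `R = r² W`, both the precision matrix `C⁻¹ + Hᵀ R⁻¹ H` and the
information vector `C⁻¹ m₀ + Hᵀ R⁻¹ y` are `r⁻²` times `Y` and `m₀ + Hᵀ W⁻¹ y`
respectively, and a common nonzero scalar cancels when solving a linear system.
-/

open Matrix

namespace Matrix

variable {n K : Type*} [Fintype n] [DecidableEq n] [Field K]

-- Unlike `Matrix.inv_smul`, no invertibility of `A` is needed: both sides are `0` otherwise.
theorem inv_smul_of_ne_zero {k : K} (hk : k ≠ 0) (A : Matrix n n K) :
    (k • A)⁻¹ = k⁻¹ • A⁻¹ := by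
  by_cases hA : IsUnit A.det
  · exact inv_smul' A (Units.mk0 k hk) hA
  · have hkA : ¬ IsUnit (k • A).det := by
      rw [det_smul]
      exact fun h => hA (isUnit_of_mul_isUnit_right h)
    rw [nonsing_inv_apply_not_isUnit _ hA, nonsing_inv_apply_not_isUnit _ hkA, smul_zero]

theorem inv_smul_mulVec_smul {k : K} (hk : k ≠ 0) (A : Matrix n n K) (v : n → K) :
    (k • A)⁻¹ *ᵥ (k • v) = A⁻¹ *ᵥ v := by
  rw [inv_smul_of_ne_zero hk, smul_mulVec, mulVec_smul, smul_smul, inv_mul_cancel₀ hk,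
    one_smul]

end Matrix

theorem bayes_eq_mas_general {m d : ℕ} (H : Matrix (Fin m) (Fin d) ℝ)
    (r σε σy : ℝ) (hr : 0 < r)
    (m₀ : Fin d → ℝ) (y : Fin m → ℝ)
    (C : Matrix (Fin d) (Fin d) ℝ) (hC : C = r ^ 2 • 1)
    (R : Matrix (Fin m) (Fin m) ℝ) (hR : R = σy ^ 2 • 1 + σε ^ 2 • (H * Hᵀ))
    (η₁ η₂ : ℝ) (hη₁ : η₁ = σε ^ 2 / r ^ 2) (hη₂ : η₂ = σy ^ 2 / r ^ 2)
    (W : Matrix (Fin m) (Fin m) ℝ) (hW : W = η₁ • (H * Hᵀ) + η₂ • 1)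
    (Y : Matrix (Fin d) (Fin d) ℝ) (hY : Y = 1 + Hᵀ * W⁻¹ * H) :
    (C⁻¹ + Hᵀ * R⁻¹ * H)⁻¹ *ᵥ (C⁻¹ *ᵥ m₀ + Hᵀ *ᵥ (R⁻¹ *ᵥ y)) =
      Y⁻¹ *ᵥ (m₀ + Hᵀ *ᵥ (W⁻¹ *ᵥ y)) := by
  have hr2 : r ^ 2 ≠ 0 := by positivity
  have hCinv : C⁻¹ = (r ^ 2)⁻¹ • 1 := by
    rw [hC, inv_smul_of_ne_zero hr2, inv_one]
  have hRinv : R⁻¹ = (r ^ 2)⁻¹ • W⁻¹ := by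
    have hRW : R = r ^ 2 • W := by
      rw [hR, hW, smul_add, smul_smul, smul_smul, hη₁, hη₂, mul_div_cancel₀ _ hr2,
        mul_div_cancel₀ _ hr2, add_comm]
    rw [hRW, inv_smul_of_ne_zero hr2]
  have hprecision : C⁻¹ + Hᵀ * R⁻¹ * H = (r ^ 2)⁻¹ • Y := by
    rw [hCinv, hRinv, hY, smul_add, Matrix.mul_smul, Matrix.smul_mul]
  have hinformation :
      C⁻¹ *ᵥ m₀ + Hᵀ *ᵥ (R⁻¹ *ᵥ y) = (r ^ 2)⁻¹ • (m₀ + Hᵀ *ᵥ (W⁻¹ *ᵥ y)) := by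
    rw [hCinv, hRinv, smul_mulVec, one_mulVec, smul_mulVec, mulVec_smul, smul_add]
  rw [hprecision, hinformation, inv_smul_mulVec_smul (inv_ne_zero hr2)]

/-- **Equivalence of the Bayesian posterior mean and the MAS closed form.**
With `C := r² I`, `R := σ_y² I + σ_ε² H Hᵀ`, `η₁ := σ_ε²/r²`, `η₂ := σ_y²/r²`,
`W := η₁ H Hᵀ + η₂ I` and `Y := I + Hᵀ W⁻¹ H`, the Bayesian posterior mean
`(C⁻¹ + Hᵀ R⁻¹ H)⁻¹ (C⁻¹ m₀ + Hᵀ R⁻¹ y)` equals `Y⁻¹ (m₀ + Hᵀ W⁻¹ y)`. -/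
theorem bayes_eq_mas {m d : ℕ} (H : Matrix (Fin m) (Fin d) ℝ)
    (r σε σy : ℝ) (hr : 0 < r) (hσε : 0 ≤ σε) (hσy : 0 < σy)
    (m₀ : Fin d → ℝ) (y : Fin m → ℝ)
    (C : Matrix (Fin d) (Fin d) ℝ) (hC : C = r ^ 2 • 1)
    (R : Matrix (Fin m) (Fin m) ℝ) (hR : R = σy ^ 2 • 1 + σε ^ 2 • (H * Hᵀ))
    (η₁ η₂ : ℝ) (hη₁ : η₁ = σε ^ 2 / r ^ 2) (hη₂ : η₂ = σy ^ 2 / r ^ 2)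
    (W : Matrix (Fin m) (Fin m) ℝ) (hW : W = η₁ • (H * Hᵀ) + η₂ • 1)
    (Y : Matrix (Fin d) (Fin d) ℝ) (hY : Y = 1 + Hᵀ * W⁻¹ * H) :
    (C⁻¹ + Hᵀ * R⁻¹ * H)⁻¹ *ᵥ (C⁻¹ *ᵥ m₀ + Hᵀ *ᵥ (R⁻¹ *ᵥ y)) =
      Y⁻¹ *ᵥ (m₀ + Hᵀ *ᵥ (W⁻¹ *ᵥ y)) :=
  bayes_eq_mas_general H r σε σy hr m₀ y C hC R hR η₁ η₂ hη₁ hη₂ W hW Y hY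
end

section
/- Let P be a real d×d matrix with Pᵀ = P and P·P = P, let q ∈ ℝ^d satisfy P·q = q, and let m₀ ∈ ℝ^d. Then for every η > 0, (η·I + P)⁻¹·(q + η·m₀) = (1/(1+η))·q + (η/(1+η))·P·m₀ + (I − P)·m₀, and consequently (η·I + P)⁻¹·(q + η·m₀) tends to q + (I − P)·m₀ as η → 0⁺. (With P = H†·H and q = H†·y this is the key limit showing MAS recovers DDNM as η₂ = 0 and η₁ → 0.) -/
/-! An idempotent `P` splits the space into its range, where `η • 1 + P` acts as `1 + η`, and its
kernel, where it acts as `η`; hence `(η • 1 + P)⁻¹ = (1 + η)⁻¹ • P + η⁻¹ • (1 - P)` for `η ≠ 0, -1`.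
Applied to `q + η • m₀` with `q` in the range this gives the explicit formula, which is continuous
at `η = 0`. -/

open Matrix

theorem IsIdempotentElem.smul_one_add_mul_eq_one {𝕜 A : Type*} [Field 𝕜] [Ring A] [Algebra 𝕜 A]
    {P : A} (hP : IsIdempotentElem P) {η : 𝕜} (hη : η ≠ 0) (hη₁ : 1 + η ≠ 0) :
    (η • 1 + P) * ((1 + η)⁻¹ • P + η⁻¹ • (1 - P)) = 1 := by
  have hP_range : (η • 1 + P) * P = (1 + η) • P := by
    rw [add_mul, hP.eq, smul_one_mul, add_smul, one_smul, add_comm]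
  have hP_kernel : (η • 1 + P) * (1 - P) = η • (1 - P) := by
    rw [mul_sub, hP_range, mul_one, add_smul, one_smul, smul_sub]; abel
  rw [mul_add, mul_smul_comm, mul_smul_comm, hP_range, hP_kernel, smul_smul, smul_smul,
    inv_mul_cancel₀ hη₁, inv_mul_cancel₀ hη, one_smul, one_smul, add_sub_cancel]

theorem Matrix.inv_smul_one_add_of_isIdempotentElem {n 𝕜 : Type*} [Fintype n] [DecidableEq n]
    [Field 𝕜] {P : Matrix n n 𝕜} (hP : IsIdempotentElem P) {η : 𝕜} (hη : η ≠ 0)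
    (hη₁ : 1 + η ≠ 0) :
    (η • 1 + P)⁻¹ = (1 + η)⁻¹ • P + η⁻¹ • (1 - P) :=
  inv_eq_right_inv (hP.smul_one_add_mul_eq_one hη hη₁)

theorem Matrix.inv_smul_one_add_mulVec_of_isIdempotentElem {n 𝕜 : Type*} [Fintype n] [DecidableEq n]
    [Field 𝕜] {P : Matrix n n 𝕜} (hP : IsIdempotentElem P) {q : n → 𝕜} (hq : P *ᵥ q = q)
    (m : n → 𝕜) {η : 𝕜} (hη : η ≠ 0) (hη₁ : 1 + η ≠ 0) :
    (η • 1 + P)⁻¹ *ᵥ (q + η • m) = (1 / (1 + η)) • q + (η / (1 + η)) • (P *ᵥ m) + (1 - P) *ᵥ m := by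
  have hq_kernel : (1 - P) *ᵥ q = 0 := by rw [sub_mulVec, one_mulVec, hq, sub_self]
  rw [inv_smul_one_add_of_isIdempotentElem hP hη hη₁]
  simp only [add_mulVec, smul_mulVec, mulVec_add, mulVec_smul, hq, hq_kernel, smul_zero, add_zero]
  match_scalars <;> field_simp

theorem proj_shift_limit_general {d : ℕ} (P : Matrix (Fin d) (Fin d) ℝ)
    (hidem : P * P = P)
    (q m₀ : Fin d → ℝ) (hq : P *ᵥ q = q) :
    (∀ η : ℝ, 0 < η →
      (η • (1 : Matrix (Fin d) (Fin d) ℝ) + P)⁻¹ *ᵥ (q + η • m₀) =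
        (1 / (1 + η)) • q + (η / (1 + η)) • (P *ᵥ m₀) +
          ((1 : Matrix (Fin d) (Fin d) ℝ) - P) *ᵥ m₀) ∧
    Filter.Tendsto
      (fun η : ℝ => (η • (1 : Matrix (Fin d) (Fin d) ℝ) + P)⁻¹ *ᵥ (q + η • m₀))
      (nhdsWithin 0 (Set.Ioi 0))
      (nhds (q + ((1 : Matrix (Fin d) (Fin d) ℝ) - P) *ᵥ m₀)) := by
  have hformula : ∀ η : ℝ, 0 < η →
      (η • (1 : Matrix (Fin d) (Fin d) ℝ) + P)⁻¹ *ᵥ (q + η • m₀) =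
        (1 / (1 + η)) • q + (η / (1 + η)) • (P *ᵥ m₀) + (1 - P) *ᵥ m₀ := fun η hη =>
    inv_smul_one_add_mulVec_of_isIdempotentElem hidem hq m₀ hη.ne' (by positivity)
  refine ⟨hformula, ?_⟩
  have hcont : ContinuousAt (fun η : ℝ =>
      (1 / (1 + η)) • q + (η / (1 + η)) • (P *ᵥ m₀) + (1 - P) *ᵥ m₀) 0 := by
    fun_prop (disch := norm_num)
  have hlim := hcont.tendsto.mono_left (nhdsWithin_le_nhds (s := Set.Ioi 0))
  simp only [add_zero, div_one, one_smul, zero_smul] at hlim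
  exact hlim.congr' (eventually_nhdsWithin_of_forall fun η hη => (hformula η hη).symm)

/-- **Key limit in the DDNM connection (Remark 1).**
For an orthogonal projection `P`, `q` in its range and any `m₀`, for every `η > 0`
`(η I + P)⁻¹ (q + η m₀) = (1/(1+η)) q + (η/(1+η)) P m₀ + (I − P) m₀`, and consequently
`(η I + P)⁻¹ (q + η m₀) → q + (I − P) m₀` as `η → 0⁺`. -/
theorem proj_shift_limit {d : ℕ} (P : Matrix (Fin d) (Fin d) ℝ)
    (hsym : Pᵀ = P) (hidem : P * P = P)
    (q m₀ : Fin d → ℝ) (hq : P *ᵥ q = q) :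
    (∀ η : ℝ, 0 < η →
      (η • (1 : Matrix (Fin d) (Fin d) ℝ) + P)⁻¹ *ᵥ (q + η • m₀) =
        (1 / (1 + η)) • q + (η / (1 + η)) • (P *ᵥ m₀) +
          ((1 : Matrix (Fin d) (Fin d) ℝ) - P) *ᵥ m₀) ∧
    Filter.Tendsto
      (fun η : ℝ => (η • (1 : Matrix (Fin d) (Fin d) ℝ) + P)⁻¹ *ᵥ (q + η • m₀))
      (nhdsWithin 0 (Set.Ioi 0))
      (nhds (q + ((1 : Matrix (Fin d) (Fin d) ℝ) - P) *ᵥ m₀)) :=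
  proj_shift_limit_general P hidem q m₀ hq
end

section
/- Let H ∈ ℝ^{m×d} have full row rank, i.e., H·Hᵀ is invertible, and let m₀ ∈ ℝ^d, y ∈ ℝ^m. For η > 0 set W(η) := η·H·Hᵀ and Y(η) := I + Hᵀ·W(η)⁻¹·H. Then Y(η)⁻¹·(m₀ + Hᵀ·W(η)⁻¹·y) tends to m₀ + Hᵀ·(H·Hᵀ)⁻¹·(y − H·m₀) as η → 0⁺. (Connection of MAS with DDNM: in the full-row-rank case H† = Hᵀ·(H·Hᵀ)⁻¹, so the limit is the DDNM update m₀ + H†·(y − H·m₀).) -/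
/-!
With `B := Hᵀ (H Hᵀ)⁻¹` we have `H B = 1`, so `P := B H` is idempotent and
`Y(η) = 1 + η⁻¹ P` has the explicit inverse `1 - (η + 1)⁻¹ P`. Hence for every `η > 0` the MAS
solution is exactly `m₀ + (η + 1)⁻¹ B (y - H m₀)`, which visibly tends to the DDNM update.
-/

open Matrix

namespace Matrix

variable {m n : Type*} [Fintype m] [DecidableEq m] [Fintype n]

theorem isIdempotentElem_mul_of_mul_eq_one {α : Type*} [Semiring α] {H : Matrix m n α}
    {B : Matrix n m α} (hHB : H * B = 1) : IsIdempotentElem (B * H) := by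
  rw [IsIdempotentElem, Matrix.mul_assoc, ← Matrix.mul_assoc H, hHB, Matrix.one_mul]

variable [DecidableEq n] {𝕜 : Type*} [Field 𝕜]

theorem inv_one_add_smul_of_isIdempotentElem {P : Matrix n n 𝕜} (hP : IsIdempotentElem P)
    {a : 𝕜} (ha : 1 + a ≠ 0) : (1 + a • P)⁻¹ = 1 - (a / (1 + a)) • P := by
  refine inv_eq_right_inv ?_
  have hcoef : a - a / (1 + a) - a * (a / (1 + a)) = 0 := by field_simp; ring
  calc (1 + a • P) * (1 - (a / (1 + a)) • P)
      = 1 + (a - a / (1 + a) - a * (a / (1 + a))) • P := by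
        simp only [mul_sub, add_mul, one_mul, mul_one, smul_mul_smul_comm, hP.eq, sub_smul]
        abel
    _ = 1 := by rw [hcoef, zero_smul, add_zero]

theorem inv_one_add_inv_smul_mul_mulVec {H : Matrix m n 𝕜} {B : Matrix n m 𝕜}
    (hHB : H * B = 1) {η : 𝕜} (hη : η ≠ 0) (hη₁ : η + 1 ≠ 0) (x : n → 𝕜) (y : m → 𝕜) :
    (1 + η⁻¹ • (B * H))⁻¹ *ᵥ (x + η⁻¹ • (B *ᵥ y)) = x + (η + 1)⁻¹ • (B *ᵥ (y - H *ᵥ x)) := by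
  have hη' : 1 + η⁻¹ ≠ 0 := by
    rw [show 1 + η⁻¹ = (η + 1) / η by field_simp]
    exact div_ne_zero hη₁ hη
  have hcoef : η⁻¹ / (1 + η⁻¹) = (η + 1)⁻¹ := by field_simp
  have hPB : B * H * B = B := by rw [Matrix.mul_assoc, hHB, Matrix.mul_one]
  rw [inv_one_add_smul_of_isIdempotentElem (isIdempotentElem_mul_of_mul_eq_one hHB) hη', hcoef]
  simp only [sub_mulVec, one_mulVec, mulVec_add, mulVec_smul, smul_mulVec, mulVec_mulVec,
    Matrix.sub_mul, Matrix.one_mul, Matrix.smul_mul, hPB, mulVec_sub]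
  match_scalars <;> field_simp; ring

theorem inv_smul_of_ne_zero_s11 {A : Matrix n n 𝕜} (hA : IsUnit A.det) {η : 𝕜} (hη : η ≠ 0) :
    (η • A)⁻¹ = η⁻¹ • A⁻¹ :=
  inv_smul' A (Units.mk0 η hη) hA

theorem mulVec_inv_one_add_mul_inv_smul_mul {H : Matrix m n 𝕜} (hH : IsUnit (H * Hᵀ))
    {η : 𝕜} (hη : η ≠ 0) (hη₁ : η + 1 ≠ 0) (x : n → 𝕜) (y : m → 𝕜) :
    (1 + Hᵀ * (η • (H * Hᵀ))⁻¹ * H)⁻¹ *ᵥ (x + Hᵀ *ᵥ ((η • (H * Hᵀ))⁻¹ *ᵥ y))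
      = x + (η + 1)⁻¹ • (Hᵀ *ᵥ ((H * Hᵀ)⁻¹ *ᵥ (y - H *ᵥ x))) := by
  have hdet : IsUnit (H * Hᵀ).det := (isUnit_iff_isUnit_det _).mp hH
  have hHB : H * (Hᵀ * (H * Hᵀ)⁻¹) = 1 := by rw [← Matrix.mul_assoc, mul_nonsing_inv _ hdet]
  rw [inv_smul_of_ne_zero_s11 hdet hη, Matrix.mul_smul, Matrix.smul_mul, smul_mulVec, mulVec_smul,
    mulVec_mulVec, mulVec_mulVec]
  exact inv_one_add_inv_smul_mul_mulVec hHB hη hη₁ x y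

end Matrix

/-- **MAS recovers DDNM (Remark 1).**
If `H` has full row rank (`H Hᵀ` invertible), then with `W(η) := η H Hᵀ` and
`Y(η) := I + Hᵀ W(η)⁻¹ H`, the MAS solution `Y(η)⁻¹ (m₀ + Hᵀ W(η)⁻¹ y)` tends, as
`η → 0⁺`, to the DDNM update `m₀ + Hᵀ (H Hᵀ)⁻¹ (y − H m₀)`. -/
theorem mas_tendsto_ddnm {m d : ℕ} (H : Matrix (Fin m) (Fin d) ℝ)
    (hH : IsUnit (H * Hᵀ)) (m₀ : Fin d → ℝ) (y : Fin m → ℝ) :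
    Filter.Tendsto
      (fun η : ℝ =>
        ((1 : Matrix (Fin d) (Fin d) ℝ) + Hᵀ * (η • (H * Hᵀ))⁻¹ * H)⁻¹ *ᵥ
          (m₀ + Hᵀ *ᵥ ((η • (H * Hᵀ))⁻¹ *ᵥ y)))
      (nhdsWithin 0 (Set.Ioi 0))
      (nhds (m₀ + Hᵀ *ᵥ ((H * Hᵀ)⁻¹ *ᵥ (y - H *ᵥ m₀)))) := by
  set v := Hᵀ *ᵥ ((H * Hᵀ)⁻¹ *ᵥ (y - H *ᵥ m₀))
  have hclosed : ∀ η ∈ Set.Ioi (0 : ℝ), m₀ + (η + 1)⁻¹ • v =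
      (1 + Hᵀ * (η • (H * Hᵀ))⁻¹ * H)⁻¹ *ᵥ (m₀ + Hᵀ *ᵥ ((η • (H * Hᵀ))⁻¹ *ᵥ y)) :=
    fun η (hη : 0 < η) => (mulVec_inv_one_add_mul_inv_smul_mul hH hη.ne' (by linarith) m₀ y).symm
  have hcont : ContinuousAt (fun η : ℝ => m₀ + (η + 1)⁻¹ • v) 0 := by
    fun_prop (disch := norm_num)
  refine .congr' (Filter.eventuallyEq_of_mem self_mem_nhdsWithin hclosed) ?_
  simpa using hcont.tendsto.mono_left nhdsWithin_le_nhds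
end

section
/- Let H ∈ ℝ^{m×d} have a singular value decomposition H = U·Σ·Vᵀ with U ∈ ℝ^{m×m} and V ∈ ℝ^{d×d} orthogonal and Σ ∈ ℝ^{m×d} rectangular diagonal with diagonal entries s₁, …, s_{min(m,d)} ≥ 0. For η₁ ≥ 0 and η₂ > 0, set W := η₁·H·Hᵀ + η₂·I and Y := I + Hᵀ·W⁻¹·H. Then Y⁻¹·Hᵀ·W⁻¹ = V·D·Uᵀ, where D ∈ ℝ^{d×m} is the rectangular diagonal matrix with diagonal entries Dᵢᵢ = sᵢ/((η₁ + 1)·sᵢ² + η₂) for 1 ≤ i ≤ min(m,d) and all other entries zero. -/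
open Matrix

/-- Rectangular "diagonal" matrix with entries given by `p` on the main diagonal. -/
def recdiag (p : ℕ → ℝ) (a b : ℕ) : Matrix (Fin a) (Fin b) ℝ :=
  Matrix.of fun i j => if (i : ℕ) = (j : ℕ) then p i else 0

lemma recdiag_mul (p q : ℕ → ℝ) (a b c : ℕ) :
    recdiag p a b * recdiag q b c =
      recdiag (fun n => if n < b then p n * q n else 0) a c := by
  ext i j
  simp only [recdiag, Matrix.mul_apply, Matrix.of_apply]
  by_cases h : (i : ℕ) < b
  · rw [Finset.sum_eq_single (⟨(i : ℕ), h⟩ : Fin b)]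
    · by_cases hij : (i : ℕ) = (j : ℕ)
      · simp [hij, hij ▸ h]
      · simp [hij]
    · intro k _ hk
      have : (i : ℕ) ≠ (k : ℕ) := by
        intro hc
        exact hk (by ext; simp [← hc])
      simp [this]
    · simp
  · have : ∀ k : Fin b, (i : ℕ) ≠ (k : ℕ) := by
      intro k hc
      exact h (hc ▸ k.isLt)
    rw [Finset.sum_eq_zero (by intro k _; simp [this k])]
    by_cases hij : (i : ℕ) = (j : ℕ)
    · simp [hij, hij ▸ h]
    · simp [hij]

lemma recdiag_congr {p q : ℕ → ℝ} {a b : ℕ} (h : ∀ n < a, p n = q n) :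
    recdiag p a b = recdiag q a b := by
  ext i j
  simp only [recdiag, Matrix.of_apply]
  split <;> simp [h i i.isLt]

lemma recdiag_transpose (p : ℕ → ℝ) (a b : ℕ) : (recdiag p a b)ᵀ = recdiag p b a := by
  ext i j
  simp only [Matrix.transpose_apply, recdiag, Matrix.of_apply]
  rcases eq_or_ne (i : ℕ) (j : ℕ) with h | h
  · simp [h]
  · simp [h, Ne.symm h]

lemma recdiag_one (a : ℕ) : recdiag (fun _ => 1) a a = (1 : Matrix (Fin a) (Fin a) ℝ) := by
  ext i j
  simp [recdiag, Matrix.one_apply, Fin.val_eq_val]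

lemma sandwich {k : ℕ} {P : Matrix (Fin k) (Fin k) ℝ} (hP : Pᵀ * P = 1)
    (A B : Matrix (Fin k) (Fin k) ℝ) : (P * A * Pᵀ) * (P * B * Pᵀ) = P * (A * B) * Pᵀ := by
  simp only [Matrix.mul_assoc]
  rw [← Matrix.mul_assoc Pᵀ P, hP, Matrix.one_mul]

/-- **Noise-transfer matrix of MAS in the SVD basis (Eq. (24)).**
If `H = U S Vᵀ` is an SVD with singular values `sᵢ` (zero beyond `min(m,d)`),
`W := η₁ H Hᵀ + η₂ I` and `Y := I + Hᵀ W⁻¹ H`, then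
`Y⁻¹ Hᵀ W⁻¹ = V D Uᵀ` where `D` is rectangular diagonal with entries
`sᵢ / ((η₁ + 1) sᵢ² + η₂)`. -/
theorem noise_transfer_svd {m d : ℕ} (H : Matrix (Fin m) (Fin d) ℝ)
    (U : Matrix (Fin m) (Fin m) ℝ) (V : Matrix (Fin d) (Fin d) ℝ)
    (s : ℕ → ℝ)
    (hU : Uᵀ * U = 1) (hV : Vᵀ * V = 1)
    (hs : ∀ i, 0 ≤ s i) (hs0 : ∀ i, min m d ≤ i → s i = 0)
    (S : Matrix (Fin m) (Fin d) ℝ)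
    (hS : S = Matrix.of fun (i : Fin m) (j : Fin d) => if (i : ℕ) = (j : ℕ) then s (i : ℕ) else 0)
    (hH : H = U * S * Vᵀ)
    (η₁ η₂ : ℝ) (hη₁ : 0 ≤ η₁) (hη₂ : 0 < η₂)
    (W : Matrix (Fin m) (Fin m) ℝ) (hW : W = η₁ • (H * Hᵀ) + η₂ • 1)
    (Y : Matrix (Fin d) (Fin d) ℝ) (hY : Y = 1 + Hᵀ * W⁻¹ * H)
    (D : Matrix (Fin d) (Fin m) ℝ)
    (hD : D = Matrix.of fun (i : Fin d) (j : Fin m) =>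
      if (i : ℕ) = (j : ℕ) then s (i : ℕ) / ((η₁ + 1) * s (i : ℕ) ^ 2 + η₂) else 0) :
    Y⁻¹ * Hᵀ * W⁻¹ = V * D * Uᵀ := by
  -- Auxiliary scalar functions
  set f : ℕ → ℝ := fun n => η₁ * s n ^ 2 + η₂ with hf
  set g : ℕ → ℝ := fun n => (η₁ + 1) * s n ^ 2 + η₂ with hg
  set y : ℕ → ℝ := fun n => 1 + s n ^ 2 * (f n)⁻¹ with hy
  have hfpos : ∀ n, 0 < f n := fun n =>
    add_pos_of_nonneg_of_pos (mul_nonneg hη₁ (sq_nonneg _)) hη₂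
  have hgpos : ∀ n, 0 < g n := fun n =>
    add_pos_of_nonneg_of_pos (mul_nonneg (by linarith) (sq_nonneg _)) hη₂
  have hypos : ∀ n, 0 < y n := fun n =>
    add_pos_of_pos_of_nonneg one_pos
      (mul_nonneg (sq_nonneg _) (le_of_lt (inv_pos.mpr (hfpos n))))
  have hfne : ∀ n, f n ≠ 0 := fun n => (hfpos n).ne'
  have hgne : ∀ n, g n ≠ 0 := fun n => (hgpos n).ne'
  have hyne : ∀ n, y n ≠ 0 := fun n => (hypos n).ne'
  have hUU : U * Uᵀ = 1 := mul_eq_one_comm.mp hU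
  have hVV : V * Vᵀ = 1 := mul_eq_one_comm.mp hV
  have hSrec : S = recdiag s m d := by rw [hS]; rfl
  have hDrec : D = recdiag (fun n => s n / g n) d m := by rw [hD]; rfl
  have hHT : Hᵀ = V * recdiag s d m * Uᵀ := by
    rw [hH, hSrec, Matrix.transpose_mul, Matrix.transpose_mul, Matrix.transpose_transpose,
      recdiag_transpose, Matrix.mul_assoc]
  -- S * Sᵀ as a square diagonal
  have hSST : recdiag s m d * recdiag s d m = recdiag (fun n => s n ^ 2) m m := by
    rw [recdiag_mul]
    apply recdiag_congr
    intro n _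
    by_cases h : n < d
    · simp [h, sq]
    · have : s n = 0 := hs0 n (le_trans (min_le_right _ _) (not_lt.mp h))
      simp [h, this]
  -- W as a sandwich
  have hmid : η₁ • recdiag (fun n => s n ^ 2) m m + η₂ • (1 : Matrix (Fin m) (Fin m) ℝ)
      = recdiag f m m := by
    ext i j
    simp only [Matrix.add_apply, Matrix.smul_apply, recdiag, Matrix.of_apply, Matrix.one_apply,
      smul_eq_mul, hf]
    rcases eq_or_ne (i : ℕ) (j : ℕ) with h | h
    · have hij : i = j := Fin.ext h
      simp [hij]
    · have hij : i ≠ j := fun hc => h (by rw [hc])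
      simp [h, hij]
  have hWs : W = U * recdiag f m m * Uᵀ := by
    rw [hW, hH, hSrec]
    rw [Matrix.transpose_mul, Matrix.transpose_mul, Matrix.transpose_transpose,
      recdiag_transpose]
    have h1 : U * recdiag s m d * Vᵀ * (V * (recdiag s d m * Uᵀ))
        = U * recdiag (fun n => s n ^ 2) m m * Uᵀ := by
      simp only [Matrix.mul_assoc]
      rw [← Matrix.mul_assoc Vᵀ V, hV, Matrix.one_mul,
        ← Matrix.mul_assoc (recdiag s m d) (recdiag s d m) Uᵀ, hSST]
    rw [h1, ← hmid, Matrix.mul_add, Matrix.add_mul]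
    simp [Matrix.mul_smul, Matrix.smul_mul, Matrix.mul_assoc, hUU]
  -- inverse of W
  have hWinv : W⁻¹ = U * recdiag (fun n => (f n)⁻¹) m m * Uᵀ := by
    apply Matrix.inv_eq_right_inv
    rw [hWs, sandwich hU, recdiag_mul]
    have : recdiag (fun n => if n < m then f n * (f n)⁻¹ else 0) m m
        = recdiag (fun _ => 1) m m :=
      recdiag_congr (fun n hn => by simp [hn, mul_inv_cancel₀ (hfne n)])
    rw [this, recdiag_one, Matrix.mul_one, hUU]
  -- Hᵀ W⁻¹ H as a sandwich around V
  have hmid2 : recdiag s d m * (recdiag (fun n => (f n)⁻¹) m m * recdiag s m d)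
      = recdiag (fun n => s n ^ 2 * (f n)⁻¹) d d := by
    rw [← Matrix.mul_assoc, recdiag_mul, recdiag_mul]
    apply recdiag_congr
    intro n _
    by_cases h : n < m
    · simp [h]; ring
    · have : s n = 0 := hs0 n (le_trans (min_le_left _ _) (not_lt.mp h))
      simp [h, this]
  have hYs : Y = V * recdiag y d d * Vᵀ := by
    rw [hY, hWinv, hHT, hH, hSrec]
    have h1 : V * recdiag s d m * Uᵀ * (U * recdiag (fun n => (f n)⁻¹) m m * Uᵀ)
        * (U * recdiag s m d * Vᵀ)
        = V * recdiag (fun n => s n ^ 2 * (f n)⁻¹) d d * Vᵀ := by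
      simp only [Matrix.mul_assoc]
      rw [← Matrix.mul_assoc Uᵀ U, hU, Matrix.one_mul,
        ← Matrix.mul_assoc Uᵀ U, hU, Matrix.one_mul,
        ← Matrix.mul_assoc (recdiag (fun n => (f n)⁻¹) m m) (recdiag s m d) Vᵀ,
        ← Matrix.mul_assoc (recdiag s d m)
          (recdiag (fun n => (f n)⁻¹) m m * recdiag s m d) Vᵀ, hmid2]
    rw [h1]
    have h2 : (1 : Matrix (Fin d) (Fin d) ℝ) = V * 1 * Vᵀ := by
      rw [Matrix.mul_one, hVV]
    rw [h2, ← Matrix.add_mul, ← Matrix.mul_add]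
    congr 2
    ext i j
    simp only [Matrix.add_apply, recdiag, Matrix.of_apply, Matrix.one_apply, hy]
    rcases eq_or_ne (i : ℕ) (j : ℕ) with h | h
    · have hij : i = j := Fin.ext h
      simp [hij]
    · have hij : i ≠ j := fun hc => h (by rw [hc])
      simp [h, hij]
  -- inverse of Y
  have hYinv : Y⁻¹ = V * recdiag (fun n => (y n)⁻¹) d d * Vᵀ := by
    apply Matrix.inv_eq_right_inv
    rw [hYs, sandwich hV, recdiag_mul]
    have : recdiag (fun n => if n < d then y n * (y n)⁻¹ else 0) d d
        = recdiag (fun _ => 1) d d :=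
      recdiag_congr (fun n hn => by simp [hn, mul_inv_cancel₀ (hyne n)])
    rw [this, recdiag_one, Matrix.mul_one, hVV]
  -- final computation
  rw [hYinv, hHT, hWinv, hDrec]
  simp only [Matrix.mul_assoc]
  rw [← Matrix.mul_assoc Vᵀ V, hV, Matrix.one_mul,
    ← Matrix.mul_assoc Uᵀ U, hU, Matrix.one_mul,
    ← Matrix.mul_assoc (recdiag s d m) (recdiag (fun n => (f n)⁻¹) m m) Uᵀ,
    ← Matrix.mul_assoc (recdiag (fun n => (y n)⁻¹) d d)
      (recdiag s d m * recdiag (fun n => (f n)⁻¹) m m) Uᵀ]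
  congr 2
  rw [← Matrix.mul_assoc, recdiag_mul, recdiag_mul]
  apply recdiag_congr
  intro n _
  by_cases h : n < m
  · by_cases h' : n < d
    · simp only [h, h', if_true]
      rw [hy, hf, hg]
      rcases eq_or_ne (s n) 0 with hz | hz
      · simp [hz]
      · field_simp
        ring
    · have : s n = 0 := hs0 n (le_trans (min_le_right _ _) (not_lt.mp h'))
      simp [h, h', this]
  · have : s n = 0 := hs0 n (le_trans (min_le_left _ _) (not_lt.mp h))
    simp [h, this]
end

section
/- Let H ∈ ℝ^{m×d} have a singular value decomposition H = U·Σ·Vᵀ with U, V orthogonal and singular values s₁, …, s_{min(m,d)} ≥ 0, let η₂ > 0 be fixed, and let m₀ ∈ ℝ^d, y ∈ ℝ^m. For η₁ > 0 set W(η₁) := η₁·H·Hᵀ + η₂·I and Y(η₁) := I + Hᵀ·W(η₁)⁻¹·H, and let x*(η₁) := Y(η₁)⁻¹·(m₀ + Hᵀ·W(η₁)⁻¹·y). Then x*(η₁) tends to m₀ as η₁ → +∞; i.e., as η₁ → ∞ the MAS estimate reduces to the unconditional denoiser output m₀. -/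
/-!
Write `W = η₁ H Hᵀ + η₂ I`. For `w = W⁻¹ v` one has `⟪w, v⟫ = η₁ ‖Hᵀ w‖² + η₂ ‖w‖²`, and
expanding `0 ≤ ‖η₂ w - v‖²` turns this into `2 η₂ η₁ ‖Hᵀ w‖² ≤ ‖v‖²`. Hence every entry of
`Hᵀ W⁻¹` is `O(η₁^{-1/2})`, so `Y = I + (Hᵀ W⁻¹) H → I` and `x* → I⁻¹ (m₀ + 0 · y) = m₀` by
continuity of matrix inversion at `I`.
-/

open Matrix Filter Topology

section

variable {ι κ : Type*} [Fintype ι] [Fintype κ]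

theorem dotProduct_smul_mul_transpose_add_smul_one_mulVec {R : Type*} [CommRing R]
    [DecidableEq ι] (H : Matrix ι κ R) (η c : R) (w : ι → R) :
    w ⬝ᵥ ((η • (H * Hᵀ) + c • 1) *ᵥ w) = η * (Hᵀ *ᵥ w ⬝ᵥ Hᵀ *ᵥ w) + c * (w ⬝ᵥ w) := by
  simp only [add_mulVec, smul_mulVec, ← mulVec_mulVec, one_mulVec, dotProduct_add,
    dotProduct_smul, dotProduct_mulVec w H, mulVec_transpose, smul_eq_mul]

theorem sq_apply_le_dotProduct_self (x : ι → ℝ) (i : ι) : x i ^ 2 ≤ x ⬝ᵥ x := by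
  simpa [dotProduct, sq] using
    Finset.single_le_sum (fun j _ => mul_self_nonneg (x j)) (Finset.mem_univ i)

variable [DecidableEq ι] (H : Matrix ι κ ℝ) {η c : ℝ}

theorem isUnit_smul_mul_transpose_add_smul_one (hη : 0 ≤ η) (hc : 0 < c) :
    IsUnit (η • (H * Hᵀ) + c • 1) := by
  have hHHt : (H * Hᵀ).PosSemidef := by
    simpa [conjTranspose_eq_transpose_of_trivial] using posSemidef_self_mul_conjTranspose H
  exact (PosDef.posSemidef_add (hHHt.smul hη) (PosDef.one.smul hc)).isUnit

theorem two_mul_mul_dotProduct_transpose_mulVec_inv_mulVec_le (hη : 0 ≤ η) (hc : 0 < c)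
    (v : ι → ℝ) :
    2 * c * η * (Hᵀ *ᵥ ((η • (H * Hᵀ) + c • 1)⁻¹ *ᵥ v) ⬝ᵥ Hᵀ *ᵥ ((η • (H * Hᵀ) + c • 1)⁻¹ *ᵥ v))
      ≤ v ⬝ᵥ v := by
  set W := η • (H * Hᵀ) + c • 1 with hW
  set w := W⁻¹ *ᵥ v
  have hWw : W *ᵥ w = v := by
    rw [mulVec_mulVec, mul_nonsing_inv _ ((isUnit_iff_isUnit_det W).mp
      (isUnit_smul_mul_transpose_add_smul_one H hη hc)), one_mulVec]
  have energy : w ⬝ᵥ v = η * (Hᵀ *ᵥ w ⬝ᵥ Hᵀ *ᵥ w) + c * (w ⬝ᵥ w) := by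
    rw [← hWw, hW, dotProduct_smul_mul_transpose_add_smul_one_mulVec]
  have square : 0 ≤ (c • w - v) ⬝ᵥ (c • w - v) := dotProduct_self_star_nonneg _
  simp only [sub_dotProduct, dotProduct_sub, smul_dotProduct, dotProduct_smul, smul_eq_mul,
    dotProduct_comm v w, energy] at square
  have hww : 0 ≤ w ⬝ᵥ w := dotProduct_self_star_nonneg w
  nlinarith [mul_nonneg (mul_nonneg hc.le hc.le) hww]

theorem sq_transpose_mul_inv_apply_le (hη : 0 < η) (hc : 0 < c) (j : κ) (i : ι) :
    (Hᵀ * (η • (H * Hᵀ) + c • 1)⁻¹ : Matrix κ ι ℝ) j i ^ 2 ≤ (2 * c * η)⁻¹ := by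
  have hcol := two_mul_mul_dotProduct_transpose_mulVec_inv_mulVec_le H hη.le hc (Pi.single i 1)
  rw [mulVec_mulVec, mulVec_single_one] at hcol
  set G := Hᵀ * (η • (H * Hᵀ) + c • 1)⁻¹
  have hpos : 0 < 2 * c * η := by positivity
  rw [← mul_one (2 * c * η)⁻¹, le_inv_mul_iff₀ hpos]
  calc 2 * c * η * G j i ^ 2 ≤ 2 * c * η * (G.col i ⬝ᵥ G.col i) :=
        mul_le_mul_of_nonneg_left (sq_apply_le_dotProduct_self (G.col i) j) hpos.le
    _ ≤ 1 := by simpa using hcol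

theorem tendsto_transpose_mul_inv_smul_mul_transpose_add_smul_one (hc : 0 < c) :
    Tendsto (fun η : ℝ => Hᵀ * (η • (H * Hᵀ) + c • 1)⁻¹) atTop (𝓝 0) := by
  refine tendsto_pi_nhds.2 fun j => tendsto_pi_nhds.2 fun i => ?_
  have hbound : Tendsto (fun η : ℝ => √(2 * c * η)⁻¹) atTop (𝓝 0) := by
    simpa using (tendsto_inv_atTop_zero.comp
      (tendsto_id.const_mul_atTop (by positivity : 0 < 2 * c))).sqrt
  refine squeeze_zero_norm' ?_ hbound
  filter_upwards [eventually_gt_atTop 0] with η hη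
  exact Real.abs_le_sqrt (sq_transpose_mul_inv_apply_le H hη hc j i)

end

theorem tendsto_inv_one_add_mul_mulVec_add_mulVec {ι κ 𝕜 : Type*} [Fintype ι] [Fintype κ]
    [DecidableEq κ] [Field 𝕜] [TopologicalSpace 𝕜] [IsTopologicalDivisionRing 𝕜]
    {α : Type*} {l : Filter α} {G : α → Matrix κ ι 𝕜} (hG : Tendsto G l (𝓝 0)) (H : Matrix ι κ 𝕜) (x : κ → 𝕜)
    (y : ι → 𝕜) : Tendsto (fun a => (1 + G a * H)⁻¹ *ᵥ (x + G a *ᵥ y)) l (𝓝 x) := by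
  have hinv : ContinuousAt Inv.inv (1 : Matrix κ κ 𝕜) :=
    continuousAt_matrix_inv _ (by simpa [Ring.inverse_eq_inv'] using continuousAt_inv₀ one_ne_zero)
  have hY : ContinuousAt (fun M : Matrix κ ι 𝕜 => (1 + M * H)⁻¹) 0 := by
    refine ContinuousAt.comp (g := Inv.inv) ?_
      (continuous_const.add (continuous_id.matrix_mul continuous_const)).continuousAt
    simpa using hinv
  have hmulVec : Continuous fun p : Matrix κ κ 𝕜 × Matrix κ ι 𝕜 => p.1 *ᵥ (x + p.2 *ᵥ y) :=
    continuous_fst.matrix_mulVec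
      (continuous_const.add (continuous_snd.matrix_mulVec continuous_const))
  have hcont := hmulVec.continuousAt.comp (hY.prodMk continuousAt_id)
  simpa only [Function.comp_def, id, Matrix.zero_mul, add_zero, inv_one, one_mulVec, zero_mulVec]
    using hcont.tendsto.comp hG

theorem mas_tendsto_prior_general {m d : ℕ} (H : Matrix (Fin m) (Fin d) ℝ)
    (η₂ : ℝ) (hη₂ : 0 < η₂)
    (m₀ : Fin d → ℝ) (y : Fin m → ℝ) :
    Filter.Tendsto
      (fun η₁ : ℝ =>
        ((1 : Matrix (Fin d) (Fin d) ℝ) + Hᵀ * (η₁ • (H * Hᵀ) + η₂ • 1)⁻¹ * H)⁻¹ *ᵥ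
          (m₀ + Hᵀ *ᵥ ((η₁ • (H * Hᵀ) + η₂ • 1)⁻¹ *ᵥ y)))
      Filter.atTop (nhds m₀) := by
  simpa only [mulVec_mulVec] using tendsto_inv_one_add_mul_mulVec_add_mulVec
    (tendsto_transpose_mul_inv_smul_mul_transpose_add_smul_one H hη₂) H m₀ y

/-- **Large-`η₁` limit of MAS: reduction to the unconditional denoiser output.**
If `H = U S Vᵀ` is an SVD and `η₂ > 0` is fixed, then with `W(η₁) := η₁ H Hᵀ + η₂ I`
and `Y(η₁) := I + Hᵀ W(η₁)⁻¹ H`, the MAS estimate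
`x*(η₁) := Y(η₁)⁻¹ (m₀ + Hᵀ W(η₁)⁻¹ y)` tends to `m₀` as `η₁ → +∞`. -/
theorem mas_tendsto_prior {m d : ℕ} (H : Matrix (Fin m) (Fin d) ℝ)
    (U : Matrix (Fin m) (Fin m) ℝ) (V : Matrix (Fin d) (Fin d) ℝ)
    (s : ℕ → ℝ)
    (hU : Uᵀ * U = 1) (hV : Vᵀ * V = 1)
    (hs : ∀ i, 0 ≤ s i) (hs0 : ∀ i, min m d ≤ i → s i = 0)
    (S : Matrix (Fin m) (Fin d) ℝ)
    (hS : S = Matrix.of fun (i : Fin m) (j : Fin d) => if (i : ℕ) = (j : ℕ) then s (i : ℕ) else 0)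
    (hH : H = U * S * Vᵀ)
    (η₂ : ℝ) (hη₂ : 0 < η₂)
    (m₀ : Fin d → ℝ) (y : Fin m → ℝ) :
    Filter.Tendsto
      (fun η₁ : ℝ =>
        ((1 : Matrix (Fin d) (Fin d) ℝ) + Hᵀ * (η₁ • (H * Hᵀ) + η₂ • 1)⁻¹ * H)⁻¹ *ᵥ
          (m₀ + Hᵀ *ᵥ ((η₁ • (H * Hᵀ) + η₂ • 1)⁻¹ *ᵥ y)))
      Filter.atTop (nhds m₀) :=
  mas_tendsto_prior_general H η₂ hη₂ m₀ y
end
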